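/- For every t = 1, …, T−1, every j = 0, …, min(h, T−t)−1, and all latent values, q(u_t | u_{max(t−h,1)}, …, u_{t−1}, u_{t+1}, …, u_{t+j}, y) = [ Σ_{u_{t+j+1}=1}^k q(u_{t+j+1} | u_{max(t+j+1−h,1)}, …, u_{t+j}, y) / q(u_t | u_{max(t−h,1)}, …, u_{t−1}, u_{t+1}, …, u_{t+j+1}, y) ]^{−1}, where for j = 0 the conditioning variables u_{t+1}, …, u_{t+j} on the left-hand side vanish. -/

import Mathlib

/-!
Write `M S` for the marginal `f(u_S, y)`, `S` for the conditioning set on the left and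
`σ = t+j+1`, so that the left side is `M (S ∪ {t}) / M S`. All of `S ∪ {t}` lies before `σ`
and contains the `h` times preceding `σ`, so by the Markov property the first conditional in
each summand may be conditioned on `S ∪ {t}` instead; Bayes' rule then turns the summand into
`M (S ∪ {σ}) / M (S ∪ {t})`, and summing out `u_σ` leaves `M S / M (S ∪ {t})`.

The Markov property comes from the bijection of pairs of latent sequences that exchanges their
parts before `σ`: when the two sequences agree on the `h` states preceding `σ`, the product of
the two joint probabilities is unchanged, because each transition only looks `h` steps back.
-/

open Finset

/-- Joint probability `f(u, y) = ∏ t, f(y_t | u_t) p(u_t | u_{max(t−h,1)}, …, u_{t−1})` of a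
latent sequence `u` and observed sequence `y` in an order-`h` hidden Markov model with `T`
occasions (0-indexed), `k` latent states and `m` response categories.  Here `p t u` stands for
the transition probability `p(u_t | u_{max(t−h,1)}, …, u_{t−1})` (it is assumed, as a
hypothesis in the theorems below, to depend on `u` only through the coordinates
`max(t−h,0), …, t` in 0-indexed notation) and `f t y v` for `f(y_t | u_t)`. -/
noncomputable def hmmJoint (T k m : ℕ) (p : Fin T → (Fin T → Fin k) → ℝ)
    (f : Fin T → Fin m → Fin k → ℝ) (y : Fin T → Fin m) (u : Fin T → Fin k) : ℝ :=
  ∏ t : Fin T, f t (y t) (u t) * p t u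

/-- Marginal probability `f(u_S, y)` of the latent coordinates in `S` (at the values given
by `u`) together with the whole observed sequence `y`: the joint `hmmJoint` summed over all
latent coordinates outside `S`. -/
noncomputable def hmmMarg (T k m : ℕ) (p : Fin T → (Fin T → Fin k) → ℝ)
    (f : Fin T → Fin m → Fin k → ℝ) (y : Fin T → Fin m)
    (S : Finset (Fin T)) (u : Fin T → Fin k) : ℝ :=
  ∑ w : Fin T → Fin k, if ∀ s ∈ S, w s = u s then hmmJoint T k m p f y w else 0

/-- Conditional (posterior) probability `q(u_t | u_S, y)` of the latent coordinate `t`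
given the latent coordinates in `S` and the observed data `y`, defined as the ratio of
marginal probabilities `f(u_t, u_S, y) / f(u_S, y)`. -/
noncomputable def hmmCond (T k m : ℕ) (p : Fin T → (Fin T → Fin k) → ℝ)
    (f : Fin T → Fin m → Fin k → ℝ) (y : Fin T → Fin m)
    (t : Fin T) (S : Finset (Fin T)) (u : Fin T → Fin k) : ℝ :=
  hmmMarg T k m p f y (insert t S) u / hmmMarg T k m p f y S u

section Marginal

variable {T k m : ℕ} {p : Fin T → (Fin T → Fin k) → ℝ} {f : Fin T → Fin m → Fin k → ℝ}
  {y : Fin T → Fin m}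

lemma hmmJoint_pos (hp : ∀ t u, 0 < p t u) (hf : ∀ t yt v, 0 < f t yt v)
    (u : Fin T → Fin k) : 0 < hmmJoint T k m p f y u :=
  prod_pos fun t _ => mul_pos (hf t (y t) (u t)) (hp t u)

lemma hmmMarg_pos (hp : ∀ t u, 0 < p t u) (hf : ∀ t yt v, 0 < f t yt v)
    (S : Finset (Fin T)) (u : Fin T → Fin k) : 0 < hmmMarg T k m p f y S u := by
  refine sum_pos' (fun w _ => ?_) ⟨u, mem_univ u, ?_⟩
  · split_ifs
    exacts [(hmmJoint_pos hp hf w).le, le_rfl]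
  · rw [if_pos fun _ _ => rfl]
    exact hmmJoint_pos hp hf u

lemma hmmMarg_update_of_notMem {σ : Fin T} {S : Finset (Fin T)} (hσ : σ ∉ S)
    (u : Fin T → Fin k) (v : Fin k) :
    hmmMarg T k m p f y S (Function.update u σ v) = hmmMarg T k m p f y S u := by
  unfold hmmMarg
  refine sum_congr rfl fun w _ => if_congr (forall₂_congr fun s hs => ?_) rfl rfl
  rw [Function.update_of_ne (ne_of_mem_of_not_mem hs hσ)]

lemma sum_hmmMarg_insert_update {σ : Fin T} {S : Finset (Fin T)} (hσ : σ ∉ S)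
    (u : Fin T → Fin k) :
    ∑ v : Fin k, hmmMarg T k m p f y (insert σ S) (Function.update u σ v)
      = hmmMarg T k m p f y S u := by
  have agree_iff : ∀ (w : Fin T → Fin k) (v : Fin k),
      (∀ s ∈ insert σ S, w s = Function.update u σ v s) ↔ (v = w σ ∧ ∀ s ∈ S, w s = u s) := by
    intro w v
    rw [forall_mem_insert, Function.update_self, eq_comm]
    refine and_congr_right' (forall₂_congr fun s hs => ?_)
    rw [Function.update_of_ne (ne_of_mem_of_not_mem hs hσ)]
  unfold hmmMarg
  rw [sum_comm]
  refine sum_congr rfl fun w _ => ?_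
  simp only [agree_iff, ite_and, sum_ite_eq', mem_univ, if_true]

lemma hmmCond_insert_div_hmmCond_insert (hp_pos : ∀ t u, 0 < p t u)
    (hf_pos : ∀ t yt v, 0 < f t yt v) (σ τ : Fin T) (S : Finset (Fin T)) (u : Fin T → Fin k) :
    hmmCond T k m p f y σ (insert τ S) u / hmmCond T k m p f y τ (insert σ S) u
      = hmmMarg T k m p f y (insert σ S) u / hmmMarg T k m p f y (insert τ S) u := by
  rw [hmmCond, hmmCond, insert_comm,
    div_div_div_cancel_left' _ _ (hmmMarg_pos hp_pos hf_pos _ _).ne']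

lemma sum_hmmMarg_insert_update_div {σ τ : Fin T} {S : Finset (Fin T)}
    (hσ : σ ∉ insert τ S) (u : Fin T → Fin k) :
    ∑ v : Fin k, hmmMarg T k m p f y (insert σ S) (Function.update u σ v)
        / hmmMarg T k m p f y (insert τ S) (Function.update u σ v)
      = hmmMarg T k m p f y S u / hmmMarg T k m p f y (insert τ S) u := by
  simp only [hmmMarg_update_of_notMem hσ, ← sum_div]
  rw [sum_hmmMarg_insert_update (fun hS => hσ (mem_insert_of_mem hS))]

end Marginal

def spliceAt {T : ℕ} {β : Type*} (s : ℕ) (a b : Fin T → β) : Fin T → β :=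
  fun r => if r.val < s then a r else b r

section Splice

variable {T : ℕ} {β : Type*} {s : ℕ} {a b : Fin T → β} {r : Fin T}

lemma spliceAt_of_lt (hr : r.val < s) : spliceAt s a b r = a r := if_pos hr

lemma spliceAt_of_le (hr : s ≤ r.val) : spliceAt s a b r = b r := if_neg (not_lt.mpr hr)

variable (s) in
def prefixSwap : Equiv.Perm ((Fin T → β) × (Fin T → β)) :=
  Function.Involutive.toPerm (fun x => (spliceAt s x.2 x.1, spliceAt s x.1 x.2)) <| by
    rintro ⟨a, b⟩
    simp only [Prod.mk.injEq]
    constructor <;> funext r <;> by_cases hr : r.val < s <;> simp [spliceAt, hr]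

lemma prefixSwap_apply (x : (Fin T → β) × (Fin T → β)) :
    prefixSwap s x = (spliceAt s x.2 x.1, spliceAt s x.1 x.2) := rfl

end Splice

def HasOrder {T k : ℕ} (h : ℕ) (p : Fin T → (Fin T → Fin k) → ℝ) : Prop :=
  ∀ (t : Fin T) (u u' : Fin T → Fin k),
    (∀ s : Fin T, t.val - h ≤ s.val → s.val ≤ t.val → u s = u' s) → p t u = p t u'

section Markov

variable {T k m h : ℕ} {p : Fin T → (Fin T → Fin k) → ℝ} {f : Fin T → Fin m → Fin k → ℝ}
  {y : Fin T → Fin m}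

lemma factor_spliceAt (hp : HasOrder h p) {s : ℕ} {a b : Fin T → Fin k}
    (hab : ∀ r : Fin T, s - h ≤ r.val → r.val < s → a r = b r) (r : Fin T) :
    f r (y r) (spliceAt s a b r) * p r (spliceAt s a b)
      = if r.val < s then f r (y r) (a r) * p r a else f r (y r) (b r) * p r b := by
  by_cases hr : r.val < s
  · rw [if_pos hr, spliceAt_of_lt hr, hp r _ a fun c _ hc => spliceAt_of_lt (by omega)]
  · rw [if_neg hr, spliceAt_of_le (by omega), hp r _ b fun c hc _ => ?_]
    by_cases hcs : c.val < s
    · rw [spliceAt_of_lt hcs, hab c (by omega) hcs]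
    · exact spliceAt_of_le (by omega)

lemma hmmJoint_mul_prefixSwap (hp : HasOrder h p) {s : ℕ} {a b : Fin T → Fin k}
    (hab : ∀ r : Fin T, s - h ≤ r.val → r.val < s → a r = b r) :
    hmmJoint T k m p f y (spliceAt s b a) * hmmJoint T k m p f y (spliceAt s a b)
      = hmmJoint T k m p f y a * hmmJoint T k m p f y b := by
  have hba : ∀ r : Fin T, s - h ≤ r.val → r.val < s → b r = a r :=
    fun r h₁ h₂ => (hab r h₁ h₂).symm
  unfold hmmJoint
  simp only [← prod_mul_distrib, factor_spliceAt hp hab, factor_spliceAt hp hba]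
  refine prod_congr rfl fun r _ => ?_
  split_ifs <;> ring

lemma hmmMarg_mul_hmmMarg_insert_comm (hp : HasOrder h p) {σ : Fin T}
    {B₁ B₂ : Finset (Fin T)} (hB : B₁ ⊆ B₂) (hB₂ : ∀ r ∈ B₂, r.val < σ.val)
    (hB₁ : ∀ r : Fin T, σ.val - h ≤ r.val → r.val < σ.val → r ∈ B₁) (u : Fin T → Fin k) :
    hmmMarg T k m p f y B₁ u * hmmMarg T k m p f y (insert σ B₂) u
      = hmmMarg T k m p f y B₂ u * hmmMarg T k m p f y (insert σ B₁) u := by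
  unfold hmmMarg
  rw [sum_mul_sum, sum_mul_sum, ← Fintype.sum_prod_type', ← Fintype.sum_prod_type']
  refine Fintype.sum_equiv (prefixSwap σ.val) _ _ fun ⟨a, b⟩ => ?_
  have swapped_agree :
      ((∀ r ∈ B₂, spliceAt σ.val b a r = u r) ∧
        ∀ r ∈ insert σ B₁, spliceAt σ.val a b r = u r) ↔
      ((∀ r ∈ B₁, a r = u r) ∧ ∀ r ∈ insert σ B₂, b r = u r) := by
    have prefix₂ : (∀ r ∈ B₂, spliceAt σ.val b a r = u r) ↔ ∀ r ∈ B₂, b r = u r :=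
      forall₂_congr fun r hr => by rw [spliceAt_of_lt (hB₂ r hr)]
    have prefix₁ : (∀ r ∈ B₁, spliceAt σ.val a b r = u r) ↔ ∀ r ∈ B₁, a r = u r :=
      forall₂_congr fun r hr => by rw [spliceAt_of_lt (hB₂ r (hB hr))]
    simp only [forall_mem_insert, spliceAt_of_le le_rfl, prefix₁, prefix₂]
    tauto
  rw [prefixSwap_apply, ite_zero_mul_ite_zero, ite_zero_mul_ite_zero,
    if_congr swapped_agree rfl rfl]
  split_ifs with hagree
  · obtain ⟨ha, hb⟩ := hagree
    refine (hmmJoint_mul_prefixSwap hp fun r h₁ h₂ => ?_).symm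
    rw [ha r (hB₁ r h₁ h₂), hb r (mem_insert_of_mem (hB (hB₁ r h₁ h₂)))]
  · rfl

lemma hmmCond_eq_of_window_subset (hp_pos : ∀ t u, 0 < p t u) (hf_pos : ∀ t yt v, 0 < f t yt v)
    (hp : HasOrder h p) {σ : Fin T} {B₁ B₂ : Finset (Fin T)} (hB : B₁ ⊆ B₂)
    (hB₂ : ∀ r ∈ B₂, r.val < σ.val)
    (hB₁ : ∀ r : Fin T, σ.val - h ≤ r.val → r.val < σ.val → r ∈ B₁) (u : Fin T → Fin k) :
    hmmCond T k m p f y σ B₁ u = hmmCond T k m p f y σ B₂ u := by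
  rw [hmmCond, hmmCond, div_eq_div_iff (hmmMarg_pos hp_pos hf_pos _ _).ne'
    (hmmMarg_pos hp_pos hf_pos _ _).ne']
  linear_combination (hmmMarg_mul_hmmMarg_insert_comm hp hB hB₂ hB₁ u).symm

end Markov

/-- Times are 0-based, so `t` is the paper's `t − 1`; the truncated subtraction `t - h` plays the
role of `max(t − h, 1)`. -/
theorem hmm_proposed_recursion
    (T k m h : ℕ)
    (p : Fin T → (Fin T → Fin k) → ℝ) (f : Fin T → Fin m → Fin k → ℝ)
    (hp_pos : ∀ (t : Fin T) (u : Fin T → Fin k), 0 < p t u)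
    (hp_dep : ∀ (t : Fin T) (u u' : Fin T → Fin k),
      (∀ s : Fin T, t.val - h ≤ s.val → s.val ≤ t.val → u s = u' s) → p t u = p t u')
    (hf_pos : ∀ (t : Fin T) (yt : Fin m) (v : Fin k), 0 < f t yt v)
    (y : Fin T → Fin m)
    (t j : ℕ) (hj2 : t + j + 2 ≤ T)
    (u : Fin T → Fin k) :
    hmmCond T k m p f y ⟨t, by omega⟩
        (Finset.univ.filter (fun s : Fin T =>
          (t - h ≤ s.val ∧ s.val < t) ∨ (t < s.val ∧ s.val ≤ t + j))) u =
      (∑ v : Fin k,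
        hmmCond T k m p f y ⟨t + j + 1, by omega⟩
            (Finset.univ.filter (fun s : Fin T =>
              t + j + 1 - h ≤ s.val ∧ s.val < t + j + 1))
            (Function.update u ⟨t + j + 1, by omega⟩ v) /
        hmmCond T k m p f y ⟨t, by omega⟩
            (Finset.univ.filter (fun s : Fin T =>
              (t - h ≤ s.val ∧ s.val < t) ∨ (t < s.val ∧ s.val ≤ t + j + 1)))
            (Function.update u ⟨t + j + 1, by omega⟩ v))⁻¹ := by
  set τ : Fin T := ⟨t, by omega⟩
  set σ : Fin T := ⟨t + j + 1, by omega⟩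
  set S := univ.filter fun s : Fin T => (t - h ≤ s.val ∧ s.val < t) ∨ (t < s.val ∧ s.val ≤ t + j)
  set W := univ.filter fun s : Fin T => t + j + 1 - h ≤ s.val ∧ s.val < t + j + 1
  have hσ : σ ∉ insert τ S := by simp [τ, σ, S, Fin.ext_iff]; omega
  have hS_succ : univ.filter (fun s : Fin T =>
      (t - h ≤ s.val ∧ s.val < t) ∨ (t < s.val ∧ s.val ≤ t + j + 1)) = insert σ S := by
    ext r; simp only [σ, S, mem_filter, mem_insert, mem_univ, true_and, Fin.ext_iff]; omega
  have hW : W ⊆ insert τ S := by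
    intro r; simp only [τ, W, S, mem_filter, mem_insert, mem_univ, true_and, Fin.ext_iff]; omega
  have hbefore : ∀ r ∈ insert τ S, r.val < σ.val := by
    intro r; simp only [τ, σ, S, mem_filter, mem_insert, mem_univ, true_and, Fin.ext_iff]; omega
  have hwindow : ∀ r : Fin T, σ.val - h ≤ r.val → r.val < σ.val → r ∈ W := by
    intro r; simp only [σ, W, mem_filter, mem_univ, true_and]; omega
  have hsummand : ∀ v, hmmCond T k m p f y σ W (Function.update u σ v) /
        hmmCond T k m p f y τ (insert σ S) (Function.update u σ v)
      = hmmMarg T k m p f y (insert σ S) (Function.update u σ v)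
        / hmmMarg T k m p f y (insert τ S) (Function.update u σ v) := fun v => by
    rw [hmmCond_eq_of_window_subset hp_pos hf_pos hp_dep hW hbefore hwindow,
      hmmCond_insert_div_hmmCond_insert hp_pos hf_pos]
  rw [hS_succ, sum_congr rfl fun v _ => hsummand v, sum_hmmMarg_insert_update_div hσ, inv_div,
    hmmCond]
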